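/- Let {W^(k)} be i.i.d. random m×m symmetric doubly stochastic matrices and set ρ = ‖E[W^(1)ᵀ W^(1)] − J‖_2 (spectral norm), where J = (1/m)11ᵀ. Then for any fixed matrix B ∈ ℝ^{d×m} and any n ≥ 1, E[‖B(∏_{l=1}^n W^(l) − J)‖_F²] ≤ ρⁿ ‖B‖_F². -/

import Mathlib

/-!
Doubly stochastic matrices fix `J` from both sides, so with `Pₙ = W⁽⁰⁾ ⋯ W⁽ⁿ⁻¹⁾` one has
`B (Pₙ₊₁ - J) = F G` with `F = B (Pₙ - J)` and `G = W⁽ⁿ⁾ - J`. Row by row,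
`‖F G‖_F² = ∑ᵢ Fᵢ ⬝ (G Gᵀ) Fᵢ`, and since `F` is independent of `W⁽ⁿ⁾` the expectation may
replace `G Gᵀ` by `E[G Gᵀ] = E[W⁽ⁿ⁾ W⁽ⁿ⁾ᵀ] - J = E[W⁽⁰⁾ᵀ W⁽⁰⁾] - J` (identical distribution and
symmetry), whose quadratic form is at most `ρ ‖Fᵢ‖²`. Hence the expectation contracts by `ρ` at every step, and the induction starts from
`‖B (1 - J)‖_F² ≤ ‖B‖_F²`, `1 - J` being an orthogonal projection.
-/

open Matrix BigOperators MeasureTheory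

noncomputable section

instance matrixMeasurableSpace {d m : ℕ} : MeasurableSpace (Matrix (Fin d) (Fin m) ℝ) :=
  MeasurableSpace.pi

/-- The averaging matrix `J = (1/m) 1 1ᵀ`. -/
def Jmat (m : ℕ) : Matrix (Fin m) (Fin m) ℝ := Matrix.of fun _ _ => (1 : ℝ) / m

def IsDoublyStochastic {m : ℕ} (W : Matrix (Fin m) (Fin m) ℝ) : Prop :=
  (∀ i j, 0 ≤ W i j) ∧ (∀ i, ∑ j, W i j = 1) ∧ (∀ j, ∑ i, W i j = 1)

def sqFrobNorm {d m : ℕ} (B : Matrix (Fin d) (Fin m) ℝ) : ℝ := ∑ i, ∑ j, (B i j)^2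

def specNorm {m : ℕ} (A : Matrix (Fin m) (Fin m) ℝ) : ℝ :=
  sSup {r : ℝ | ∃ x : Fin m → ℝ, (∑ i, (x i)^2) = 1 ∧ r = Real.sqrt (∑ i, ((A *ᵥ x) i)^2)}

def matExp {Ω : Type*} [MeasurableSpace Ω] (μ : Measure Ω) {d m : ℕ}
    (f : Ω → Matrix (Fin d) (Fin m) ℝ) : Matrix (Fin d) (Fin m) ℝ :=
  Matrix.of fun i j => ∫ ω, f ω i j ∂μ

open ProbabilityTheory
open scoped RealInnerProductSpace

/- `matrixMeasurableSpace` is the Borel σ-algebra, so continuous maps of matrices are measurable. -/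
instance {d m : ℕ} : BorelSpace (Matrix (Fin d) (Fin m) ℝ) :=
  inferInstanceAs (BorelSpace (Fin d → Fin m → ℝ))

instance {d m : ℕ} : SecondCountableTopology (Matrix (Fin d) (Fin m) ℝ) :=
  inferInstanceAs (SecondCountableTopology (Fin d → Fin m → ℝ))

section DoublyStochastic

variable {m : ℕ} {P Q W : Matrix (Fin m) (Fin m) ℝ}

lemma isDoublyStochastic_iff_mem : IsDoublyStochastic W ↔ W ∈ doublyStochastic ℝ (Fin m) :=
  mem_doublyStochastic_iff_sum.symm

lemma mul_Jmat_of_mem (hW : W ∈ doublyStochastic ℝ (Fin m)) : W * Jmat m = Jmat m := by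
  ext i j
  simp [Matrix.mul_apply, Jmat, ← Finset.sum_mul, sum_row_of_mem_doublyStochastic hW]

lemma Jmat_mul_of_mem (hW : W ∈ doublyStochastic ℝ (Fin m)) : Jmat m * W = Jmat m := by
  ext i j
  simp [Matrix.mul_apply, Jmat, ← Finset.mul_sum, sum_col_of_mem_doublyStochastic hW]

lemma Jmat_mul_Jmat : Jmat m * Jmat m = Jmat m := by
  ext i j
  have : (m : ℝ) ≠ 0 := Nat.cast_ne_zero.2 (Fin.pos i).ne'
  simp only [Matrix.mul_apply, Jmat, Matrix.of_apply, Finset.sum_const, Finset.card_univ,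
    Fintype.card_fin, nsmul_eq_mul]
  field_simp

lemma transpose_Jmat : (Jmat m)ᵀ = Jmat m := rfl

lemma sub_Jmat_mul_sub_Jmat (hP : P ∈ doublyStochastic ℝ (Fin m))
    (hQ : Q ∈ doublyStochastic ℝ (Fin m)) : (P - Jmat m) * (Q - Jmat m) = P * Q - Jmat m := by
  rw [Matrix.sub_mul, Matrix.mul_sub, Matrix.mul_sub, mul_Jmat_of_mem hP, Jmat_mul_of_mem hQ,
    Jmat_mul_Jmat]
  abel

lemma mul_transpose_sub_Jmat (hW : W ∈ doublyStochastic ℝ (Fin m)) :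
    (W - Jmat m) * (W - Jmat m)ᵀ = W * Wᵀ - Jmat m := by
  rw [transpose_sub, transpose_Jmat,
    sub_Jmat_mul_sub_Jmat hW (transpose_mem_doublyStochastic_iff.2 hW)]

lemma mul_transpose_mem_doublyStochastic (hW : W ∈ doublyStochastic ℝ (Fin m)) :
    W * Wᵀ ∈ doublyStochastic ℝ (Fin m) :=
  mul_mem hW (transpose_mem_doublyStochastic_iff.2 hW)

lemma abs_sub_Jmat_apply_le_one (hW : W ∈ doublyStochastic ℝ (Fin m)) (i j : Fin m) :
    |(W - Jmat m) i j| ≤ 1 :=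
  abs_sub_le_of_nonneg_of_le (nonneg_of_mem_doublyStochastic hW)
    (le_one_of_mem_doublyStochastic hW) (by simp [Jmat])
    (div_le_one_of_le₀ (Nat.one_le_cast.2 (Fin.pos i)) (Nat.cast_nonneg m))

end DoublyStochastic

lemma abs_mul_apply_le_sum_abs {ι κ ν : Type*} [Fintype κ] (B : Matrix ι κ ℝ)
    {A : Matrix κ ν ℝ} (hA : ∀ j k, |A j k| ≤ 1) (i : ι) (k : ν) :
    |(B * A) i k| ≤ ∑ j, |B i j| := by
  rw [Matrix.mul_apply]
  refine (Finset.abs_sum_le_sum_abs _ _).trans (Finset.sum_le_sum fun j _ => ?_)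
  rw [abs_mul]
  exact mul_le_of_le_one_right (abs_nonneg _) (hA j k)

section SpectralNorm

variable {m : ℕ}

lemma sqrt_sum_sq_eq_norm_toLp (x : Fin m → ℝ) :
    √(∑ i, x i ^ 2) = ‖(WithLp.toLp 2 x : EuclideanSpace ℝ (Fin m))‖ := by
  simp [EuclideanSpace.norm_eq]

lemma specNorm_eq_norm_toEuclideanCLM (A : Matrix (Fin m) (Fin m) ℝ) :
    specNorm A = ‖toEuclideanCLM (𝕜 := ℝ) A‖ := by
  set T := toEuclideanCLM (𝕜 := ℝ) A
  have hS : ∀ x : Fin m → ℝ, ∑ i, x i ^ 2 = 1 → √(∑ i, (A *ᵥ x) i ^ 2) ≤ ‖T‖ := fun x hx => by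
    calc √(∑ i, (A *ᵥ x) i ^ 2) = ‖T (WithLp.toLp 2 x)‖ := by
          rw [toEuclideanCLM_toLp, sqrt_sum_sq_eq_norm_toLp]
      _ ≤ ‖T‖ * ‖(WithLp.toLp 2 x : EuclideanSpace ℝ (Fin m))‖ := T.le_opNorm _
      _ = ‖T‖ := by rw [← sqrt_sum_sq_eq_norm_toLp, hx, Real.sqrt_one, mul_one]
  unfold specNorm
  refine le_antisymm (Real.sSup_le (by rintro _ ⟨x, hx, rfl⟩; exact hS x hx) (norm_nonneg _)) ?_
  refine ContinuousLinearMap.opNorm_le_of_unit_norm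
    (Real.sSup_nonneg (by rintro _ ⟨x, -, rfl⟩; exact Real.sqrt_nonneg _)) fun v hv => ?_
  refine le_csSup ⟨_, by rintro _ ⟨x, hx, rfl⟩; exact hS x hx⟩ ⟨v.ofLp, ?_, ?_⟩
  · rwa [← Real.sqrt_eq_one, sqrt_sum_sq_eq_norm_toLp]
  · rw [sqrt_sum_sq_eq_norm_toLp, ← toEuclideanCLM_toLp]

lemma specNorm_nonneg (A : Matrix (Fin m) (Fin m) ℝ) : 0 ≤ specNorm A :=
  specNorm_eq_norm_toEuclideanCLM A ▸ norm_nonneg _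

lemma dotProduct_mulVec_le_specNorm_mul (A : Matrix (Fin m) (Fin m) ℝ) (x : Fin m → ℝ) :
    x ⬝ᵥ (A *ᵥ x) ≤ specNorm A * (x ⬝ᵥ x) := by
  set v : EuclideanSpace ℝ (Fin m) := WithLp.toLp 2 x
  set T := toEuclideanCLM (𝕜 := ℝ) A
  have hxx : x ⬝ᵥ x = ‖v‖ ^ 2 := by
    rw [← sqrt_sum_sq_eq_norm_toLp, Real.sq_sqrt (by positivity)]
    simp [dotProduct, sq]
  calc x ⬝ᵥ (A *ᵥ x) = ⟪v, T v⟫ := (inner_toEuclideanCLM A v v).symm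
    _ ≤ ‖v‖ * (‖T‖ * ‖v‖) :=
        (real_inner_le_norm _ _).trans (mul_le_mul_of_nonneg_left (T.le_opNorm v) (norm_nonneg _))
    _ = specNorm A * (x ⬝ᵥ x) := by rw [hxx, specNorm_eq_norm_toEuclideanCLM]; ring

end SpectralNorm

section Frobenius

variable {d m p : ℕ}

lemma dotProduct_mul_transpose_mulVec (G : Matrix (Fin m) (Fin p) ℝ) (v : Fin m → ℝ) :
    v ⬝ᵥ ((G * Gᵀ) *ᵥ v) = (v ᵥ* G) ⬝ᵥ (v ᵥ* G) := by
  rw [← mulVec_mulVec, dotProduct_mulVec, mulVec_transpose]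

lemma sqFrobNorm_eq_sum_dotProduct (F : Matrix (Fin d) (Fin m) ℝ) :
    sqFrobNorm F = ∑ i, F i ⬝ᵥ F i := by
  simp [sqFrobNorm, dotProduct, sq]

lemma sqFrobNorm_mul (F : Matrix (Fin d) (Fin m) ℝ) (G : Matrix (Fin m) (Fin p) ℝ) :
    sqFrobNorm (F * G) = ∑ i, F i ⬝ᵥ ((G * Gᵀ) *ᵥ F i) := by
  simp only [sqFrobNorm_eq_sum_dotProduct, dotProduct_mul_transpose_mulVec, mul_apply_eq_vecMul]

lemma sqFrobNorm_mul_one_sub_Jmat_le (B : Matrix (Fin d) (Fin m) ℝ) :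
    sqFrobNorm (B * (1 - Jmat m)) ≤ sqFrobNorm B := by
  rw [sqFrobNorm_mul, mul_transpose_sub_Jmat (one_mem _), transpose_one, one_mul,
    sqFrobNorm_eq_sum_dotProduct]
  refine Finset.sum_le_sum fun i _ => ?_
  have hJ : 0 ≤ B i ⬝ᵥ (Jmat m *ᵥ B i) := by
    have hJJ : Jmat m = Jmat m * (Jmat m)ᵀ := by rw [transpose_Jmat, Jmat_mul_Jmat]
    rw [hJJ, dotProduct_mul_transpose_mulVec]
    exact Finset.sum_nonneg fun j _ => mul_self_nonneg _
  simp only [Matrix.sub_mulVec, one_mulVec, dotProduct_sub]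
  linarith

end Frobenius

lemma measurable_matrix_apply {d m : ℕ} (i : Fin d) (j : Fin m) :
    Measurable fun A : Matrix (Fin d) (Fin m) ℝ => A i j :=
  (measurable_pi_apply j).comp (measurable_pi_apply i)

lemma measurable_mul_transpose_self {m p : ℕ} :
    Measurable fun A : Matrix (Fin m) (Fin p) ℝ => A * Aᵀ :=
  Continuous.measurable (by fun_prop)

lemma dotProduct_mulVec_eq_sum {m : ℕ} (A : Matrix (Fin m) (Fin m) ℝ) (x : Fin m → ℝ) :
    x ⬝ᵥ (A *ᵥ x) = ∑ k, ∑ l, A k l * (x k * x l) := by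
  simp only [dotProduct, mulVec, Finset.mul_sum]
  exact Finset.sum_congr rfl fun k _ => Finset.sum_congr rfl fun l _ => by ring

section Expectation

variable {Ω : Type*} [MeasurableSpace Ω] {μ : Measure Ω}

lemma ProbabilityTheory.IdentDistrib.matExp_comp {α Ω' : Type*} [MeasurableSpace α]
    [MeasurableSpace Ω'] {ν : Measure Ω'} {X : Ω → α} {Y : Ω' → α} (h : IdentDistrib X Y μ ν)
    {d m : ℕ} {φ : α → Matrix (Fin d) (Fin m) ℝ} (hφ : Measurable φ) :
    matExp μ (fun ω => φ (X ω)) = matExp ν (fun ω => φ (Y ω)) := by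
  ext i j
  exact (h.comp ((measurable_matrix_apply i j).comp hφ)).integral_eq

lemma matExp_sub_const [IsProbabilityMeasure μ] {d m : ℕ} {f : Ω → Matrix (Fin d) (Fin m) ℝ}
    (hf : ∀ i j, Integrable (fun ω => f ω i j) μ) (C : Matrix (Fin d) (Fin m) ℝ) :
    matExp μ (fun ω => f ω - C) = matExp μ f - C := by
  ext i j
  simp [matExp, integral_sub (hf i j) (integrable_const _)]

lemma integrable_apply_of_mem_doublyStochastic [IsFiniteMeasure μ] {m : ℕ}
    {f : Ω → Matrix (Fin m) (Fin m) ℝ} (hf : Measurable f)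
    (hmem : ∀ ω, f ω ∈ doublyStochastic ℝ (Fin m)) (i j : Fin m) :
    Integrable (fun ω => f ω i j) μ := by
  refine Integrable.of_bound ((measurable_matrix_apply i j).comp hf).aestronglyMeasurable 1
    (ae_of_all _ fun ω => ?_)
  rw [Real.norm_eq_abs, abs_le]
  exact ⟨by linarith [nonneg_of_mem_doublyStochastic (hmem ω) (i := i) (j := j)],
    le_one_of_mem_doublyStochastic (hmem ω)⟩

lemma integrable_mul_sub_Jmat_apply_mul_apply [IsFiniteMeasure μ] {d m : ℕ}
    (B : Matrix (Fin d) (Fin m) ℝ) {P : Ω → Matrix (Fin m) (Fin m) ℝ} (hP : Measurable P)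
    (hPmem : ∀ ω, P ω ∈ doublyStochastic ℝ (Fin m)) (i : Fin d) (k l : Fin m) :
    Integrable (fun ω => (B * (P ω - Jmat m)) i k * (B * (P ω - Jmat m)) i l) μ := by
  have hF (ω : Ω) (k : Fin m) : |(B * (P ω - Jmat m)) i k| ≤ ∑ j, |B i j| :=
    abs_mul_apply_le_sum_abs B (abs_sub_Jmat_apply_le_one (hPmem ω)) i k
  refine Integrable.of_bound ((Continuous.measurable (by fun_prop : Continuous fun A :
      Matrix (Fin m) (Fin m) ℝ => (B * (A - Jmat m)) i k * (B * (A - Jmat m)) i l)).comp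
    hP).aestronglyMeasurable ((∑ j, |B i j|) ^ 2) (ae_of_all _ fun ω => ?_)
  rw [Real.norm_eq_abs, abs_mul, sq]
  exact mul_le_mul (hF ω k) (hF ω l) (abs_nonneg _) (Finset.sum_nonneg fun j _ => abs_nonneg _)

lemma matExp_mul_transpose_sub_Jmat_eq [IsProbabilityMeasure μ] {m : ℕ}
    {V W : Ω → Matrix (Fin m) (Fin m) ℝ} (h : IdentDistrib V W μ μ) (hW : Measurable W)
    (hWsymm : ∀ ω, (W ω).IsSymm) (hWmem : ∀ ω, W ω ∈ doublyStochastic ℝ (Fin m)) :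
    matExp μ (fun ω => V ω * (V ω)ᵀ - Jmat m) = matExp μ (fun ω => (W ω)ᵀ * W ω) - Jmat m := by
  have hWW (ω : Ω) : (W ω)ᵀ * W ω = W ω * (W ω)ᵀ := by rw [(hWsymm ω).eq]
  rw [h.matExp_comp (φ := fun A => A * Aᵀ - Jmat m) (Continuous.measurable (by fun_prop)),
    matExp_sub_const (f := fun ω => W ω * (W ω)ᵀ) (integrable_apply_of_mem_doublyStochastic
      (measurable_mul_transpose_self.comp hW) fun ω =>
        mul_transpose_mem_doublyStochastic (hWmem ω))]
  simp only [hWW]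

section QuadraticForm

variable {m : ℕ} {X : Ω → Fin m → ℝ} {M : Ω → Matrix (Fin m) (Fin m) ℝ}

lemma ProbabilityTheory.IndepFun.indepFun_apply_mul_apply (hXM : IndepFun X M μ) (k l : Fin m) :
    IndepFun (fun ω => M ω k l) (fun ω => X ω k * X ω l) μ :=
  hXM.symm.comp (measurable_matrix_apply k l)
    (by fun_prop : Measurable fun x : Fin m → ℝ => x k * x l)

lemma integrable_dotProduct_mulVec_of_indepFun (hXM : IndepFun X M μ)
    (hX : ∀ k l, Integrable (fun ω => X ω k * X ω l) μ)
    (hM : ∀ k l, Integrable (fun ω => M ω k l) μ) :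
    Integrable (fun ω => X ω ⬝ᵥ (M ω *ᵥ X ω)) μ := by
  simp_rw [dotProduct_mulVec_eq_sum]
  exact integrable_finsetSum _ fun k _ => integrable_finsetSum _ fun l _ =>
    (hXM.indepFun_apply_mul_apply k l).integrable_mul (hM k l) (hX k l)

lemma integral_dotProduct_mulVec_of_indepFun (hXM : IndepFun X M μ)
    (hX : ∀ k l, Integrable (fun ω => X ω k * X ω l) μ)
    (hM : ∀ k l, Integrable (fun ω => M ω k l) μ) :
    ∫ ω, X ω ⬝ᵥ (M ω *ᵥ X ω) ∂μ = ∫ ω, X ω ⬝ᵥ (matExp μ M *ᵥ X ω) ∂μ := by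
  have hsum : ∀ N : Ω → Matrix (Fin m) (Fin m) ℝ,
      (∀ k l, Integrable (fun ω => N ω k l * (X ω k * X ω l)) μ) →
      ∫ ω, X ω ⬝ᵥ (N ω *ᵥ X ω) ∂μ = ∑ k, ∑ l, ∫ ω, N ω k l * (X ω k * X ω l) ∂μ :=
    fun N hN => by
      simp_rw [dotProduct_mulVec_eq_sum]
      rw [integral_finsetSum _ fun k _ => integrable_finsetSum _ fun l _ => hN k l]
      exact Finset.sum_congr rfl fun k _ => integral_finsetSum _ fun l _ => hN k l
  rw [hsum M fun k l => (hXM.indepFun_apply_mul_apply k l).integrable_mul (hM k l) (hX k l),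
    hsum (fun _ => matExp μ M) fun k l => (hX k l).const_mul _]
  refine Finset.sum_congr rfl fun k _ => Finset.sum_congr rfl fun l _ => ?_
  rw [integral_const_mul]
  exact (hXM.indepFun_apply_mul_apply k l).integral_mul_eq_mul_integral
    (hM k l).aestronglyMeasurable (hX k l).aestronglyMeasurable

end QuadraticForm

lemma ProbabilityTheory.iIndepFun.indepFun_list_prod_range {m : ℕ}
    {W : ℕ → Ω → Matrix (Fin m) (Fin m) ℝ} (h : iIndepFun W μ) (hW : ∀ k, Measurable (W k))
    (n : ℕ) : IndepFun (fun ω => ((List.range n).map fun l => W l ω).prod) (W n) μ := by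
  let φ : (Finset.range n → Matrix (Fin m) (Fin m) ℝ) → Matrix (Fin m) (Fin m) ℝ :=
    fun g => ((List.finRange n).map fun i : Fin n => g ⟨i, Finset.mem_range.2 i.2⟩).prod
  have hφ : Measurable φ := (continuous_list_prod _ fun (i : Fin n) _ =>
    continuous_apply (⟨i, _⟩ : Finset.range n)).measurable
  have hprod : (fun ω => ((List.range n).map fun l => W l ω).prod) =
      φ ∘ fun ω (i : Finset.range n) => W i ω := by
    funext ω
    rw [← List.map_coe_finRange_eq_range, List.map_map]
    rfl
  rw [hprod]
  exact (h.indepFun_finset (Finset.range n) {n} (by simp) hW).comp hφ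
    (measurable_pi_apply ⟨n, Finset.mem_singleton_self n⟩)

variable [IsProbabilityMeasure μ] {d m : ℕ}

lemma integral_sqFrobNorm_mul_le_of_indepFun {p : ℕ} {F : Ω → Matrix (Fin d) (Fin m) ℝ}
    {G : Ω → Matrix (Fin m) (Fin p) ℝ} (hFG : IndepFun F G μ)
    (hF : ∀ i k l, Integrable (fun ω => F ω i k * F ω i l) μ)
    (hG : ∀ k l, Integrable (fun ω => (G ω * (G ω)ᵀ) k l) μ) :
    ∫ ω, sqFrobNorm (F ω * G ω) ∂μ ≤
      specNorm (matExp μ fun ω => G ω * (G ω)ᵀ) * ∫ ω, sqFrobNorm (F ω) ∂μ := by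
  set C := matExp μ fun ω => G ω * (G ω)ᵀ
  have hrow (i : Fin d) : IndepFun (fun ω => F ω i) (fun ω => G ω * (G ω)ᵀ) μ :=
    hFG.comp (measurable_pi_apply i) measurable_mul_transpose_self
  have hrowC (i : Fin d) : IndepFun (fun ω => F ω i) (fun _ => C) μ :=
    indepFun_const_right _ C
  have hself (i : Fin d) : Integrable (fun ω => F ω i ⬝ᵥ F ω i) μ :=
    integrable_finsetSum _ fun k _ => hF i k k
  calc ∫ ω, sqFrobNorm (F ω * G ω) ∂μ
      = ∑ i, ∫ ω, F ω i ⬝ᵥ ((G ω * (G ω)ᵀ) *ᵥ F ω i) ∂μ := by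
        simp_rw [sqFrobNorm_mul]
        exact integral_finsetSum _ fun i _ =>
          integrable_dotProduct_mulVec_of_indepFun (hrow i) (hF i) hG
    _ = ∑ i, ∫ ω, F ω i ⬝ᵥ (C *ᵥ F ω i) ∂μ :=
        Finset.sum_congr rfl fun i _ => integral_dotProduct_mulVec_of_indepFun (hrow i) (hF i) hG
    _ ≤ ∑ i, ∫ ω, specNorm C * (F ω i ⬝ᵥ F ω i) ∂μ :=
        Finset.sum_le_sum fun i _ => integral_mono
          (integrable_dotProduct_mulVec_of_indepFun (hrowC i) (hF i) fun _ _ => integrable_const _)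
          ((hself i).const_mul _) fun ω => dotProduct_mulVec_le_specNorm_mul C (F ω i)
    _ = specNorm C * ∫ ω, sqFrobNorm (F ω) ∂μ := by
        simp_rw [integral_const_mul, ← Finset.mul_sum, sqFrobNorm_eq_sum_dotProduct,
          integral_finsetSum _ fun i _ => hself i]

lemma integral_sqFrobNorm_sub_Jmat_mul_le (B : Matrix (Fin d) (Fin m) ℝ)
    {P V : Ω → Matrix (Fin m) (Fin m) ℝ} (hP : Measurable P) (hV : Measurable V)
    (hPmem : ∀ ω, P ω ∈ doublyStochastic ℝ (Fin m))
    (hVmem : ∀ ω, V ω ∈ doublyStochastic ℝ (Fin m)) (hPV : IndepFun P V μ) :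
    ∫ ω, sqFrobNorm (B * (P ω - Jmat m) * (V ω - Jmat m)) ∂μ ≤
      specNorm (matExp μ fun ω => V ω * (V ω)ᵀ - Jmat m) *
        ∫ ω, sqFrobNorm (B * (P ω - Jmat m)) ∂μ := by
  have hGG (ω : Ω) := mul_transpose_sub_Jmat (hVmem ω)
  have hFG : IndepFun (fun ω => B * (P ω - Jmat m)) (fun ω => V ω - Jmat m) μ :=
    hPV.comp (φ := fun A => B * (A - Jmat m)) (ψ := fun A => A - Jmat m)
      (Continuous.measurable (by fun_prop)) (Continuous.measurable (by fun_prop))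
  have hG (k l : Fin m) : Integrable (fun ω => (V ω * (V ω)ᵀ - Jmat m) k l) μ :=
    (integrable_apply_of_mem_doublyStochastic (measurable_mul_transpose_self.comp hV)
      (fun ω => mul_transpose_mem_doublyStochastic (hVmem ω)) k l).sub (integrable_const _)
  simpa only [hGG] using integral_sqFrobNorm_mul_le_of_indepFun hFG
    (integrable_mul_sub_Jmat_apply_mul_apply B hP hPmem) (by simpa only [hGG] using hG)

end Expectation

theorem contraction_lemma_general {Ω : Type*} [MeasurableSpace Ω] (μ : Measure Ω)
    [IsProbabilityMeasure μ] {d m : ℕ}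
    (W : ℕ → Ω → Matrix (Fin m) (Fin m) ℝ)
    (hmeas : ∀ k, Measurable (W k))
    (hsym : ∀ k ω, (W k ω).IsSymm)
    (hds : ∀ k ω, IsDoublyStochastic (W k ω))
    (hindep : @ProbabilityTheory.iIndepFun _ _ _ _ (fun _ => matrixMeasurableSpace) W μ)
    (hident : ∀ k, ProbabilityTheory.IdentDistrib (W k) (W 0) μ μ)
    (ρ : ℝ) (hρ : ρ = specNorm (matExp μ (fun ω => (W 0 ω)ᵀ * (W 0 ω)) - Jmat m))
    (B : Matrix (Fin d) (Fin m) ℝ) (n : ℕ) :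
    ∫ ω, sqFrobNorm (B * (((List.range n).map (fun l => W l ω)).prod - Jmat m)) ∂μ ≤
      ρ ^ n * sqFrobNorm B := by
  set P : ℕ → Ω → Matrix (Fin m) (Fin m) ℝ := fun n ω => ((List.range n).map fun l => W l ω).prod
  have hWmem (k : ℕ) (ω : Ω) := isDoublyStochastic_iff_mem.1 (hds k ω)
  have hPmem (k : ℕ) (ω : Ω) : P k ω ∈ doublyStochastic ℝ (Fin m) :=
    list_prod_mem (by simp [hWmem])
  have hPmeas (k : ℕ) : Measurable (P k) := by
    simpa [P, List.map_map, Function.comp_def] using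
      List.measurable_fun_prod ((List.range k).map W) (by simpa using fun l _ => hmeas l)
  have hρ0 : 0 ≤ ρ := hρ ▸ specNorm_nonneg _
  have hstep (k : ℕ) : ∫ ω, sqFrobNorm (B * (P (k + 1) ω - Jmat m)) ∂μ ≤
      ρ * ∫ ω, sqFrobNorm (B * (P k ω - Jmat m)) ∂μ := by
    have hrec (ω : Ω) : P (k + 1) ω - Jmat m = (P k ω - Jmat m) * (W k ω - Jmat m) := by
      rw [sub_Jmat_mul_sub_Jmat (hPmem k ω) (hWmem k ω)]
      simp [P, List.prod_range_succ]
    simp_rw [hrec, ← Matrix.mul_assoc, hρ,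
      ← matExp_mul_transpose_sub_Jmat_eq (hident k) (hmeas 0) (hsym 0) (hWmem 0)]
    exact integral_sqFrobNorm_sub_Jmat_mul_le B (hPmeas k) (hmeas k) (hPmem k) (hWmem k)
      (hindep.indepFun_list_prod_range hmeas k)
  calc _ ≤ ρ ^ n * ∫ ω, sqFrobNorm (B * (P 0 ω - Jmat m)) ∂μ :=
        le_geom (u := fun k => ∫ ω, sqFrobNorm (B * (P k ω - Jmat m)) ∂μ) hρ0 n fun k _ => hstep k
    _ = ρ ^ n * sqFrobNorm (B * (1 - Jmat m)) := by simp [P]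
    _ ≤ ρ ^ n * sqFrobNorm B := by gcongr; exact sqFrobNorm_mul_one_sub_Jmat_le B

/-- contraction lemma. For i.i.d. random symmetric doubly stochastic
matrices `W^(1), W^(2), ...` with `ρ = ‖E[W^(1)ᵀ W^(1)] − J‖₂`, any fixed `B ∈ ℝ^{d×m}`
and any `n ≥ 1`:  `E‖B(∏_{l=1}^n W^(l) − J)‖_F² ≤ ρⁿ ‖B‖_F²`. -/
theorem contraction_lemma {Ω : Type*} [MeasurableSpace Ω] (μ : Measure Ω)
    [IsProbabilityMeasure μ] {d m : ℕ}
    (W : ℕ → Ω → Matrix (Fin m) (Fin m) ℝ)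
    (hmeas : ∀ k, Measurable (W k))
    (hsym : ∀ k ω, (W k ω).IsSymm)
    (hds : ∀ k ω, IsDoublyStochastic (W k ω))
    (hindep : @ProbabilityTheory.iIndepFun _ _ _ _ (fun _ => matrixMeasurableSpace) W μ)
    (hident : ∀ k, ProbabilityTheory.IdentDistrib (W k) (W 0) μ μ)
    (ρ : ℝ) (hρ : ρ = specNorm (matExp μ (fun ω => (W 0 ω)ᵀ * (W 0 ω)) - Jmat m))
    (B : Matrix (Fin d) (Fin m) ℝ) (n : ℕ) (hn : 1 ≤ n) :
    ∫ ω, sqFrobNorm (B * (((List.range n).map (fun l => W l ω)).prod - Jmat m)) ∂μ ≤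
      ρ ^ n * sqFrobNorm B :=
  contraction_lemma_general μ W hmeas hsym hds hindep hident ρ hρ B n

end
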